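/- arXiv:1410.2187 — 2 statements merged into one kernel-verified Lean document; each statement's English description precedes it below -/
import Mathlib

section
/- Let y_1, …, y_N ∈ ℂ be distinct, w_1, …, w_N ∈ ℂ, and suppose v : ℂ → ℂ satisfies, for x near y_i (x ≠ y_j for all j), the exact discrete identities ∑_j w_j (v(y_j) − v(x))/(y_j − x) = 0 and ∑_j w_j (v(y_j) − v(x) − (y_j − x) v′(x))/(y_j − x)² = 0 with ∑_j w_j/(y_j − x) ≠ 0. Then v′(x) = (∑_j w_j (v(y_j) − v(x))/(y_j − x)²) / (∑_j w_j/(y_j − x)), and in the limit x → y_i this expression tends to −(1/w_i) ∑_{j≠i} w_j (v(y_j) − v(y_i))/(y_j − y_i), provided v is differentiable at y_i, w_i ≠ 0, and the weights satisfy the compensation identity at y_i. -/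
open Filter Topology Finset

/-!
The second identity is linear in `v'(x)`, and solving it gives the barycentric quotient.
For the limit, multiply numerator and denominator of the quotient by `y_i - x`. The
denominator becomes `w_i` plus terms vanishing at `y_i`. In the numerator the `i`-th term
is singular, but the first identity replaces it by minus the sum of the others, and what
remains, `∑_{j ≠ i} w_j (v(y_j) - v(x)) (y_i - y_j) / (y_j - x)²`, is continuous at `y_i`.
-/

section Algebra

variable {K ι : Type*} [Field K] [Fintype ι] (w y a : ι → K) {x : K}

theorem eq_div_sum_div_of_sum_div_sq_eq_zero {c d : K} (hx : ∀ j, x ≠ y j)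
    (hden : ∑ j, w j / (y j - x) ≠ 0)
    (h : ∑ j, w j * (a j - c - (y j - x) * d) / (y j - x) ^ 2 = 0) :
    d = (∑ j, w j * (a j - c) / (y j - x) ^ 2) / ∑ j, w j / (y j - x) := by
  have hsplit : ∑ j, w j * (a j - c - (y j - x) * d) / (y j - x) ^ 2
      = ∑ j, w j * (a j - c) / (y j - x) ^ 2 - (∑ j, w j / (y j - x)) * d := by
    rw [sum_mul, ← sum_sub_distrib]
    refine sum_congr rfl fun j _ => ?_
    have := sub_ne_zero.2 (hx j).symm
    field_simp
  rw [eq_div_iff hden]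
  linear_combination hsplit - h

variable [DecidableEq ι] (i : ι)

theorem sub_mul_sum_div_sq_of_sum_div_eq_zero {c : K} (hx : ∀ j, x ≠ y j)
    (h : ∑ j, w j * (a j - c) / (y j - x) = 0) :
    (y i - x) * ∑ j, w j * (a j - c) / (y j - x) ^ 2
      = ∑ j ∈ univ.erase i, w j * (a j - c) * (y i - y j) / (y j - x) ^ 2 := by
  -- `(y i - x) / (y j - x) ^ 2 = 1 / (y j - x) + (y i - y j) / (y j - x) ^ 2`, and the
  -- first part sums to zero by `h`
  have hsplit : (y i - x) * ∑ j, w j * (a j - c) / (y j - x) ^ 2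
      = ∑ j, w j * (a j - c) / (y j - x) + ∑ j, w j * (a j - c) * (y i - y j) / (y j - x) ^ 2 := by
    rw [mul_sum, ← sum_add_distrib]
    refine sum_congr rfl fun j _ => ?_
    have := sub_ne_zero.2 (hx j).symm
    field_simp
    ring
  rw [hsplit, h, zero_add, ← add_sum_erase _ _ (mem_univ i), sub_self, mul_zero, zero_div,
    zero_add]

theorem sub_mul_sum_div_eq_add_sum_erase (hx : ∀ j, x ≠ y j) :
    (y i - x) * ∑ j, w j / (y j - x) = w i + ∑ j ∈ univ.erase i, w j * (y i - x) / (y j - x) := by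
  rw [mul_sum, ← add_sum_erase _ _ (mem_univ i), mul_div_cancel₀ _ (sub_ne_zero.2 (hx i).symm)]
  congr 1
  refine sum_congr rfl fun j _ => ?_
  ring

theorem sum_div_sq_div_sum_div_eq {c : K} (hx : ∀ j, x ≠ y j)
    (h : ∑ j, w j * (a j - c) / (y j - x) = 0) :
    (∑ j, w j * (a j - c) / (y j - x) ^ 2) / ∑ j, w j / (y j - x)
      = (∑ j ∈ univ.erase i, w j * (a j - c) * (y i - y j) / (y j - x) ^ 2)
        / (w i + ∑ j ∈ univ.erase i, w j * (y i - x) / (y j - x)) := by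
  rw [← mul_div_mul_left _ _ (sub_ne_zero.2 (hx i).symm),
    sub_mul_sum_div_sq_of_sum_div_eq_zero w y a i hx h, sub_mul_sum_div_eq_add_sum_erase w y i hx]

end Algebra

section Limits

variable {K ι : Type*} [Field K] [TopologicalSpace K] [IsTopologicalDivisionRing K]
  [Fintype ι] [DecidableEq ι] (w y a : ι → K) {i : ι}

theorem tendsto_sum_erase_mul_sub_div_sq {f : K → K} (hf : ContinuousAt f (y i))
    (hy : ∀ j, j ≠ i → y j ≠ y i) :
    Tendsto (fun x => ∑ j ∈ univ.erase i, w j * (a j - f x) * (y i - y j) / (y j - x) ^ 2)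
      (𝓝 (y i)) (𝓝 (-∑ j ∈ univ.erase i, w j * (a j - f (y i)) / (y j - y i))) := by
  rw [← sum_neg_distrib]
  refine tendsto_finsetSum _ fun j hj => ?_
  have hyj := sub_ne_zero.2 (hy j (ne_of_mem_erase hj))
  have hval : -(w j * (a j - f (y i)) / (y j - y i))
      = w j * (a j - f (y i)) * (y i - y j) / (y j - y i) ^ 2 := by
    field_simp
    ring
  rw [hval]
  exact ((((tendsto_const_nhds (x := a j)).sub hf).const_mul (w j)).mul_const (y i - y j)).div
    ((tendsto_const_nhds.sub tendsto_id).pow 2) (pow_ne_zero 2 hyj)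

theorem tendsto_add_sum_erase_mul_sub_div (hy : ∀ j, j ≠ i → y j ≠ y i) :
    Tendsto (fun x => w i + ∑ j ∈ univ.erase i, w j * (y i - x) / (y j - x))
      (𝓝 (y i)) (𝓝 (w i)) := by
  have hlim : Tendsto (fun x => w i + ∑ j ∈ univ.erase i, w j * (y i - x) / (y j - x))
      (𝓝 (y i)) (𝓝 (w i + ∑ j ∈ univ.erase i, w j * (y i - y i) / (y j - y i))) :=
    tendsto_const_nhds.add <| tendsto_finsetSum _ fun j hj =>
      ((tendsto_const_nhds.sub tendsto_id).const_mul (w j)).div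
        (tendsto_const_nhds.sub tendsto_id) (sub_ne_zero.2 (hy j (ne_of_mem_erase hj)))
  simpa using hlim

end Limits

/-- Barycentric derivative formula and its Schneider–Werner-type node limit: if the two
exact discrete compensated identities hold for all `x` near `y_i` (distinct from the
nodes) with nonzero denominator, then `v'(x)` equals the barycentric quotient there, and
as `x → y_i` the quotient tends to `-(1/w_i) ∑_{j≠i} w_j (v(y_j) - v(y_i))/(y_j - y_i)`,
provided `v` is differentiable at `y_i` and `w_i ≠ 0`. -/
theorem stmt_14
    (N : ℕ) (y : Fin N → ℂ) (hy : Function.Injective y)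
    (w : Fin N → ℂ) (i : Fin N) (hwi : w i ≠ 0)
    (v : ℂ → ℂ) (hvd : DifferentiableAt ℂ v (y i))
    (U : Set ℂ) (hU : U ∈ 𝓝 (y i))
    (h1 : ∀ x ∈ U, (∀ j, x ≠ y j) →
      (∑ j, w j * (v (y j) - v x) / (y j - x)) = 0)
    (h2 : ∀ x ∈ U, (∀ j, x ≠ y j) →
      (∑ j, w j * (v (y j) - v x - (y j - x) * deriv v x) / (y j - x) ^ 2) = 0)
    (hden : ∀ x ∈ U, (∀ j, x ≠ y j) → (∑ j, w j / (y j - x)) ≠ 0) :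
    (∀ x ∈ U, (∀ j, x ≠ y j) →
      deriv v x =
        (∑ j, w j * (v (y j) - v x) / (y j - x) ^ 2) / (∑ j, w j / (y j - x))) ∧
    Filter.Tendsto
      (fun x => (∑ j, w j * (v (y j) - v x) / (y j - x) ^ 2) / (∑ j, w j / (y j - x)))
      (𝓝[{x : ℂ | ∀ j, x ≠ y j}] (y i))
      (𝓝 (-(1 / w i) * ∑ j ∈ Finset.univ.erase i,
        w j * (v (y j) - v (y i)) / (y j - y i))) := by
  set a : Fin N → ℂ := fun j => v (y j)
  refine ⟨fun x hx hxy => eq_div_sum_div_of_sum_div_sq_eq_zero w y a hxy (hden x hx hxy)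
    (h2 x hx hxy), ?_⟩
  have hsep : ∀ j, j ≠ i → y j ≠ y i := fun _ => hy.ne
  have hlim := (tendsto_sum_erase_mul_sub_div_sq w y a hvd.continuousAt hsep).div
    (tendsto_add_sum_erase_mul_sub_div w y hsep) hwi
  have heq : (fun x => (∑ j ∈ univ.erase i, w j * (a j - v x) * (y i - y j) / (y j - x) ^ 2)
        / (w i + ∑ j ∈ univ.erase i, w j * (y i - x) / (y j - x)))
      =ᶠ[𝓝[{x : ℂ | ∀ j, x ≠ y j}] (y i)]
        fun x => (∑ j, w j * (a j - v x) / (y j - x) ^ 2) / ∑ j, w j / (y j - x) := by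
    filter_upwards [mem_nhdsWithin_of_mem_nhds hU, self_mem_nhdsWithin] with x hxU hxy
    exact (sum_div_sq_div_sum_div_eq w y a i hxy (h1 x hxU hxy)).symm
  convert (hlim.mono_left nhdsWithin_le_nhds).congr' heq using 2
  ring
end

section
/- For complex numbers s, t with s ≠ t (mod 2π) and an injective C¹ map Z : ℝ/2πℤ → ℂ with Z′ never zero, the function (s,t) ↦ (e^{is} − e^{it})/(Z(s) − Z(t)) extends continuously (indeed C^{k−1} if Z is C^k) to the diagonal s = t with value i e^{it}/Z′(t), and this extension is nonvanishing. -/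
/-!
Write `e(x) = exp(i x)`. The divided difference of a C¹ function is the average of its
derivative along the segment, `(f s - f t) / (s - t) = ∫₀¹ f'(t + (s - t) u) du`, which is
jointly continuous in `(s, t)` and equals `f' t` on the diagonal. On the strip `|s - t| < 2π`
the kernel is therefore the quotient of the averaged derivatives of `e` and `Z`, continuous
since `Z' ≠ 0`. Both `e` and `Z` are `2π`-periodic, so every point with `e(s) = e(t)` is a
translate of a diagonal point; elsewhere `Z s ≠ Z t` by injectivity on a period, and the kernel
is a quotient of continuous functions with nonvanishing denominator.
-/

open Complex Real Function Set Filter Topology AddCommGroup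

section IntegralSlope

variable {E : Type*} [NormedAddCommGroup E] [NormedSpace ℝ E]

noncomputable def integralSlope (f : ℝ → E) (s t : ℝ) : E :=
  ∫ u in (0 : ℝ)..1, deriv f (t + (s - t) * u)

theorem integralSlope_self [CompleteSpace E] (f : ℝ → E) (t : ℝ) :
    integralSlope f t t = deriv f t := by
  simp [integralSlope]

theorem continuous_integralSlope {f : ℝ → E} (hf : ContDiff ℝ 1 f) :
    Continuous fun p : ℝ × ℝ => integralSlope f p.1 p.2 :=
  intervalIntegral.continuous_parametric_intervalIntegral_of_continuous'
    (f := fun (p : ℝ × ℝ) (u : ℝ) => deriv f (p.2 + (p.1 - p.2) * u))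
    ((hf.continuous_deriv le_rfl).comp (by fun_prop)) 0 1

theorem sub_smul_integralSlope [CompleteSpace E] {f : ℝ → E} (hf : ContDiff ℝ 1 f)
    (s t : ℝ) : (s - t) • integralSlope f s t = f s - f t := by
  rw [integralSlope, intervalIntegral.smul_integral_comp_add_mul, mul_zero, add_zero, mul_one,
    add_sub_cancel, intervalIntegral.integral_deriv_eq_sub
      (fun x _ => (hf.differentiable one_ne_zero).differentiableAt)
      ((hf.continuous_deriv le_rfl).intervalIntegrable _ _)]

end IntegralSlope

theorem div_sub_eq_integralSlope_div {f g : ℝ → ℂ} (hf : ContDiff ℝ 1 f)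
    (hg : ContDiff ℝ 1 g) {s t : ℝ} (hst : s ≠ t) :
    (f s - f t) / (g s - g t) = integralSlope f s t / integralSlope g s t := by
  rw [← sub_smul_integralSlope hf, ← sub_smul_integralSlope hg, real_smul, real_smul,
    mul_div_mul_left _ _ (by exact_mod_cast sub_ne_zero.2 hst)]

theorem AddCommGroup.ModEq.eq_of_abs_sub_lt {α : Type*} [Ring α] [LinearOrder α]
    [IsStrictOrderedRing α] {p a b : α} (h : a ≡ b [PMOD p]) (hab : |b - a| < p) : a = b := by
  obtain ⟨m, hm⟩ := modEq_iff_zsmul'.1 h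
  rcases eq_or_ne m 0 with rfl | hm0
  · rw [zero_smul, sub_eq_zero] at hm
    exact hm.symm
  · have hp : |p| ≤ |b - a| := by
      rw [hm, zsmul_eq_mul, abs_mul]
      exact le_mul_of_one_le_left (abs_nonneg _) (by exact_mod_cast Int.one_le_abs hm0)
    exact absurd (hp.trans_lt hab) (not_lt.2 (le_abs_self p))

theorem Function.Periodic.modEq_of_injOn {α β : Type*} [AddCommGroup α] [LinearOrder α]
    [IsOrderedAddMonoid α] [Archimedean α] {f : α → β} {c a : α} (hf : Periodic f c)
    (hc : 0 < c) (hinj : InjOn f (Ico a (a + c))) {x y : α} (hxy : f x = f y) :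
    x ≡ y [PMOD c] := by
  have hmod : ∀ z, f (toIcoMod hc a z) = f z := fun z => hf.sub_zsmul_eq _
  rw [← toIcoMod_inj hc (c := a)]
  exact hinj (toIcoMod_mem_Ico hc a x) (toIcoMod_mem_Ico hc a y) (by rw [hmod, hmod, hxy])

theorem cexp_I_mul_eq_iff_modEq {s t : ℝ} :
    cexp (I * s) = cexp (I * t) ↔ s ≡ t [PMOD 2 * π] := by
  rw [← Circle.exp_inj, Circle.ext_iff, Circle.coe_exp, Circle.coe_exp, mul_comm I, mul_comm I]

theorem contDiff_cexp_I_mul : ContDiff ℝ 1 fun x : ℝ => cexp (I * x) :=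
  (contDiff_const.mul ofRealCLM.contDiff).cexp

theorem deriv_cexp_I_mul (t : ℝ) : deriv (fun x : ℝ => cexp (I * x)) t = I * cexp (I * t) := by
  have h := ((hasDerivAt_id (t : ℂ)).const_mul I).cexp.comp_ofReal
  rw [id, mul_one, mul_comm] at h
  exact h.deriv

open scoped Classical in
noncomputable def kressKernel (Z : ℝ → ℂ) (s t : ℝ) : ℂ :=
  if cexp (I * s) = cexp (I * t) then I * cexp (I * t) / deriv Z t
  else (cexp (I * s) - cexp (I * t)) / (Z s - Z t)

section KressKernel

variable {Z : ℝ → ℂ}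

theorem kressKernel_add_int_mul (hper : Periodic Z (2 * π)) (k : ℤ) (s t : ℝ) :
    kressKernel Z (s + k * (2 * π)) t = kressKernel Z s t := by
  have he : cexp (I * ↑(s + k * (2 * π))) = cexp (I * s) :=
    cexp_I_mul_eq_iff_modEq.2 <| by
      simpa only [zsmul_eq_mul] using add_zsmul_modEq (p := 2 * π) (a := s) k
  simp only [kressKernel, he, hper.int_mul k s]

theorem kressKernel_eq_integralSlope_div (hZ : ContDiff ℝ 1 Z) {s t : ℝ}
    (hst : |s - t| < 2 * π) :
    kressKernel Z s t =
      integralSlope (fun x : ℝ => cexp (I * x)) s t / integralSlope Z s t := by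
  rcases eq_or_ne s t with rfl | hne
  · simp [kressKernel, integralSlope_self, deriv_cexp_I_mul]
  · have he : cexp (I * s) ≠ cexp (I * t) := fun he =>
      hne ((cexp_I_mul_eq_iff_modEq.1 he).eq_of_abs_sub_lt (by rwa [abs_sub_comm]))
    rw [kressKernel, if_neg he, div_sub_eq_integralSlope_div contDiff_cexp_I_mul hZ hne]

theorem continuousAt_kressKernel_diag (hZ : ContDiff ℝ 1 Z) {t : ℝ} (hZ' : deriv Z t ≠ 0) :
    ContinuousAt (uncurry (kressKernel Z)) (t, t) := by
  have hstrip : {p : ℝ × ℝ | |p.1 - p.2| < 2 * π} ∈ 𝓝 (t, t) :=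
    (isOpen_lt (by fun_prop) continuous_const).mem_nhds (by simpa using pi_pos)
  have hquot : ContinuousAt (fun p : ℝ × ℝ =>
      integralSlope (fun x : ℝ => cexp (I * x)) p.1 p.2 / integralSlope Z p.1 p.2) (t, t) :=
    (continuous_integralSlope contDiff_cexp_I_mul).continuousAt.div
      (continuous_integralSlope hZ).continuousAt (by rwa [integralSlope_self])
  exact hquot.congr (eventually_of_mem hstrip fun p hp =>
    (kressKernel_eq_integralSlope_div hZ hp).symm)

theorem continuousAt_kressKernel_of_ne (hZ : Continuous Z) {s t : ℝ}
    (he : cexp (I * s) ≠ cexp (I * t)) (hZst : Z s ≠ Z t) :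
    ContinuousAt (uncurry (kressKernel Z)) (s, t) := by
  have hoff : {p : ℝ × ℝ | cexp (I * p.1) ≠ cexp (I * p.2)} ∈ 𝓝 (s, t) :=
    (isOpen_ne_fun (by fun_prop) (by fun_prop)).mem_nhds he
  have hquot : ContinuousAt (fun p : ℝ × ℝ =>
      (cexp (I * p.1) - cexp (I * p.2)) / (Z p.1 - Z p.2)) (s, t) :=
    ContinuousAt.div (by fun_prop) (by fun_prop) (sub_ne_zero.2 hZst)
  exact hquot.congr (eventually_of_mem hoff fun p hp => (if_neg hp).symm)

theorem cexp_I_mul_eq_of_eq (hper : Periodic Z (2 * π)) (hinj : InjOn Z (Ico 0 (2 * π)))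
    {s t : ℝ} (hZst : Z s = Z t) : cexp (I * s) = cexp (I * t) :=
  cexp_I_mul_eq_iff_modEq.2 (hper.modEq_of_injOn two_pi_pos (by rwa [zero_add]) hZst)

theorem continuous_kressKernel (hper : Periodic Z (2 * π)) (hinj : InjOn Z (Ico 0 (2 * π)))
    (hZ : ContDiff ℝ 1 Z) (hZ' : ∀ t, deriv Z t ≠ 0) :
    Continuous (uncurry (kressKernel Z)) := by
  refine continuous_iff_continuousAt.2 fun ⟨s, t⟩ => ?_
  by_cases he : cexp (I * s) = cexp (I * t)
  · obtain ⟨k, hk⟩ := modEq_iff_eq_add_zsmul.1 (cexp_I_mul_eq_iff_modEq.1 he).symm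
    rw [zsmul_eq_mul] at hk
    have hshift : uncurry (kressKernel Z) =
        uncurry (kressKernel Z) ∘ fun p : ℝ × ℝ => (p.1 - k * (2 * π), p.2) := by
      funext ⟨a, b⟩
      simp only [comp_apply, uncurry_apply_pair]
      rw [← kressKernel_add_int_mul hper k (a - k * (2 * π)), sub_add_cancel]
    rw [hshift]
    exact (continuousAt_kressKernel_diag hZ (hZ' t)).comp_of_eq (by fun_prop)
      (by rw [hk, add_sub_cancel_right])
  · exact continuousAt_kressKernel_of_ne hZ.continuous he
      (mt (cexp_I_mul_eq_of_eq hper hinj) he)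

theorem kressKernel_ne_zero (hper : Periodic Z (2 * π)) (hinj : InjOn Z (Ico 0 (2 * π)))
    (hZ' : ∀ t, deriv Z t ≠ 0) (s t : ℝ) : kressKernel Z s t ≠ 0 := by
  unfold kressKernel
  split_ifs with he
  · exact div_ne_zero (mul_ne_zero I_ne_zero (exp_ne_zero _)) (hZ' t)
  · exact div_ne_zero (sub_ne_zero.2 he) (sub_ne_zero.2 (mt (cexp_I_mul_eq_of_eq hper hinj) he))

end KressKernel

/-- The Kress-split kernel `(s,t) ↦ (e^{is} - e^{it})/(Z(s) - Z(t))` for an injective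
C¹ `2π`-periodic parametrization `Z` with nonvanishing derivative extends continuously
to the diagonal with value `i e^{it}/Z'(t)`, and the extension is nonvanishing. -/
theorem stmt_16
    (Z : ℝ → ℂ) (hZ : ContDiff ℝ 1 Z)
    (hper : Function.Periodic Z (2 * Real.pi))
    (hinj : Set.InjOn Z (Set.Ico 0 (2 * Real.pi)))
    (hZ' : ∀ t, deriv Z t ≠ 0) :
    ∃ F : ℝ → ℝ → ℂ,
      Continuous (Function.uncurry F) ∧
      (∀ s t : ℝ, Complex.exp (Complex.I * s) ≠ Complex.exp (Complex.I * t) →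
        F s t = (Complex.exp (Complex.I * s) - Complex.exp (Complex.I * t)) / (Z s - Z t)) ∧
      (∀ t : ℝ, F t t = Complex.I * Complex.exp (Complex.I * t) / deriv Z t) ∧
      (∀ s t : ℝ, F s t ≠ 0) :=
  ⟨kressKernel Z, continuous_kressKernel hper hinj hZ hZ', fun _ _ he => if_neg he,
    fun _ => if_pos rfl, kressKernel_ne_zero hper hinj hZ'⟩
end
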